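/- arXiv:2507.05738 — 3 statements merged into one kernel-verified Lean document; each statement's English description precedes it below -/
import Mathlib

section
/- In any pure-strategy Nash equilibrium of the first-price auction, where the highest bidder wins and pays her own (highest) bid, the price paid lies in [v_2, v_1]. -/
open Classical

/-- The k-th highest bid (k counted from 1). -/
noncomputable def kthHighest {n : ℕ} (b : Fin n → ℝ) (k : ℕ) : ℝ :=
  ((List.ofFn b).mergeSort (fun x y => decide (y ≤ x))).getD (k - 1) 0

/-- Agent `i` wins: her bid is highest, with ties broken toward the
agent with the highest valuation, i.e. (for strictly decreasing valuations)
the lowest index among the maximal bidders. -/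
def wins {n : ℕ} (b : Fin n → ℝ) (i : Fin n) : Prop :=
  (∀ j, b j ≤ b i) ∧ ∀ j, b j = b i → i ≤ j

/-- The price paid by the winner in the k-price auction (2 ≤ k ≤ n), or in the
first-price auction (the case k = n+1), where the winner pays the highest bid. -/
noncomputable def price {n : ℕ} (k : ℕ) (b : Fin n → ℝ) : ℝ :=
  if k = n + 1 then kthHighest b 1 else kthHighest b k

/-- The winner gets her valuation minus the price; losers get 0. -/
noncomputable def utility {n : ℕ} (v : Fin n → ℝ) (k : ℕ) (b : Fin n → ℝ)
    (i : Fin n) : ℝ :=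
  if wins b i then v i - price k b else 0

/-- Pure-strategy Nash equilibrium with nonnegative bids: no agent can strictly
improve her utility by a unilateral deviation to another nonnegative bid. -/
def NashEq {n : ℕ} (v : Fin n → ℝ) (k : ℕ) (b : Fin n → ℝ) : Prop :=
  (∀ i, 0 ≤ b i) ∧
  ∀ i : Fin n, ∀ b' : ℝ, 0 ≤ b' →
    utility v k (Function.update b i b') i ≤ utility v k b i

/-- One-based valuation indexing, with the convention `v_{n+1} = 0`. -/
noncomputable def vIdx {n : ℕ} (v : Fin n → ℝ) (j : ℕ) : ℝ :=
  if h : 1 ≤ j ∧ j ≤ n then v ⟨j - 1, by omega⟩ else 0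

lemma kth1_eq {n : ℕ} (hn : 0 < n) (b : Fin n → ℝ) (i : Fin n)
    (h : ∀ j, b j ≤ b i) : kthHighest b 1 = b i := by
  unfold kthHighest
  have hperm : ((List.ofFn b).mergeSort (fun x y => decide (y ≤ x))).Perm (List.ofFn b) :=
    List.mergeSort_perm _ _
  have hsort : ((List.ofFn b).mergeSort (fun x y => decide (y ≤ x))).Pairwise
      (fun x y => y ≤ x) := by
    have := List.pairwise_mergeSort (le := fun x y : ℝ => decide (y ≤ x))
      (by intro a b c; simp; intros; linarith) (by intro a b; simp; exact le_total b a)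
      (List.ofFn b)
    simpa using this
  have hne : (List.ofFn b).mergeSort (fun x y => decide (y ≤ x)) ≠ [] :=
    List.ne_nil_of_length_pos (by rw [hperm.length_eq]; simp; omega)
  obtain ⟨a, t, ht⟩ := List.exists_cons_of_ne_nil hne
  rw [ht] at hperm hsort ⊢
  have hmem : ∀ x ∈ a :: t, x ≤ a := by
    intro x hx
    rcases List.mem_cons.1 hx with rfl | hx
    · exact le_refl x
    · exact (List.pairwise_cons.1 hsort).1 x hx
  have hbi : b i ∈ a :: t := hperm.mem_iff.2 (by simp [List.mem_ofFn])
  have h1 : b i ≤ a := hmem _ hbi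
  have h2 : a ≤ b i := by
    have : a ∈ List.ofFn b := hperm.mem_iff.1 List.mem_cons_self
    obtain ⟨m, rfl⟩ := List.mem_ofFn.1 this
    exact h m
  simpa using le_antisymm h2 h1

lemma exists_winner {n : ℕ} (hn : 0 < n) (b : Fin n → ℝ) : ∃ i, wins b i := by
  haveI : Nonempty (Fin n) := ⟨⟨0, hn⟩⟩
  obtain ⟨i0, hi0⟩ := Finite.exists_max b
  set S := Finset.univ.filter (fun j => b j = b i0) with hS
  have hSne : S.Nonempty := ⟨i0, by simp [hS]⟩
  refine ⟨S.min' hSne, ?_, ?_⟩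
  · have : b (S.min' hSne) = b i0 := by
      have := S.min'_mem hSne; simp [hS] at this; exact this
    intro j; rw [this]; exact hi0 j
  · intro j hj
    have hmem : b (S.min' hSne) = b i0 := by
      have := S.min'_mem hSne; simp [hS] at this; exact this
    exact S.min'_le j (by simp only [hS, Finset.mem_filter, Finset.mem_univ, true_and]; rw [hj, hmem])

theorem stmt3 {n : ℕ} (hn : 2 ≤ n) (v : Fin n → ℝ) (hv : StrictAnti v) (hvpos : ∀ i, 0 < v i)
    (b : Fin n → ℝ) (hb : NashEq v (n + 1) b) :
    vIdx v 2 ≤ price (n + 1) b ∧ price (n + 1) b ≤ v ⟨0, by omega⟩ := by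
  have hn0 : 0 < n := by omega
  obtain ⟨hbnn, hnash⟩ := hb
  obtain ⟨i, hwi⟩ := exists_winner hn0 b
  have hprice : price (n + 1) b = b i := by
    rw [price, if_pos rfl, kth1_eq hn0 b i hwi.1]
  have hv2 : vIdx v 2 = v ⟨1, by omega⟩ := by
    rw [vIdx, dif_pos ⟨by omega, hn⟩]
  -- upper bound
  have hupper : b i ≤ v i := by
    have hdev := hnash i 0 le_rfl
    have hrhs : utility v (n + 1) b i = v i - b i := by
      rw [utility, if_pos hwi, hprice]
    have hlhs : 0 ≤ utility v (n + 1) (Function.update b i 0) i := by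
      rw [utility]
      split
      · rename_i hw
        have : price (n + 1) (Function.update b i 0) = 0 := by
          rw [price, if_pos rfl, kth1_eq hn0 _ i hw.1, Function.update_self]
        rw [this]; linarith [hvpos i]
      · exact le_refl 0
    rw [hrhs] at hdev; linarith
  refine ⟨?_, ?_⟩
  · -- lower bound
    by_contra hlt
    rw [hprice, hv2] at hlt
    push_neg at hlt
    set v2 : ℝ := v ⟨1, by omega⟩ with hv2def
    -- pick a losing agent among indices 0 and 1
    obtain ⟨j, hjw, hjle⟩ : ∃ j : Fin n, ¬ wins b j ∧ (j : ℕ) ≤ 1 := by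
      by_cases h0 : wins b ⟨0, by omega⟩
      · refine ⟨⟨1, by omega⟩, ?_, by simp⟩
        intro h1
        have he : b ⟨1, by omega⟩ = b ⟨0, by omega⟩ :=
          le_antisymm (h0.1 _) (h1.1 _)
        have := h1.2 ⟨0, by omega⟩ he.symm
        simp [Fin.le_def] at this
      · exact ⟨⟨0, by omega⟩, h0, by simp⟩
    have hvj : v2 ≤ v j := by
      rcases Nat.lt_or_ge (j : ℕ) 1 with h | h
      · exact le_of_lt (hv (show j < ⟨1, by omega⟩ by rw [Fin.lt_def]; simpa using h))
      · have : j = ⟨1, by omega⟩ := Fin.ext (by simp; omega)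
        rw [this]
    set b' : ℝ := (b i + v2) / 2 with hb'
    have hib' : b i < b' := by
      rw [hb']; linarith
    have hb'v2 : b' < v2 := by
      rw [hb']; linarith
    have hb'nn : 0 ≤ b' := by
      have := hbnn i; rw [hb']; have := hvpos ⟨1, by omega⟩; rw [← hv2def] at this; linarith
    have hdev := hnash j b' hb'nn
    have hrhs : utility v (n + 1) b j = 0 := by rw [utility, if_neg hjw]
    have hwin : wins (Function.update b j b') j := by
      constructor
      · intro m
        rw [Function.update_self]
        rcases eq_or_ne m j with rfl | hm
        · rw [Function.update_self]
        · rw [Function.update_of_ne hm]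
          exact le_trans (hwi.1 m) (le_of_lt hib')
      · intro m hm
        rcases eq_or_ne m j with rfl | hmne
        · exact le_refl _
        · exfalso
          rw [Function.update_self, Function.update_of_ne hmne] at hm
          have := hwi.1 m
          rw [hm] at this
          linarith
    have hlhs : utility v (n + 1) (Function.update b j b') j = v j - b' := by
      rw [utility, if_pos hwin, price, if_pos rfl,
        kth1_eq hn0 _ j hwin.1, Function.update_self]
    rw [hrhs, hlhs] at hdev
    linarith
  · rw [hprice]
    calc b i ≤ v i := hupper
    _ ≤ v ⟨0, by omega⟩ := hv.antitone (by simp [Fin.le_def])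
end

section
/- For the k-price auction with 2 ≤ k ≤ n+1, there exists a pure-strategy Nash equilibrium with seller revenue p if and only if v_{n−(k−3)} ≤ p ≤ v_1 (with the conventions v_{n+1} = 0 and v_0 undefined, the lower bound is 0 when k = 2 and v_2 when k = n+1). -/
/-!
Deviating to the bid 0 is always possible, so in equilibrium the winner does not lose money and
the price is at most `v₁`. For the lower bound, a loser valuing the item above the price `p` may
outbid everybody. In the first-price auction she can do so with a bid strictly between `p` and her
value, so `p ≥ v₂`. In the `k`-price auction outbidding everybody must cost her at least her
value, which forces her own bid to be at most `p` while at least `k - 1` bids exceed `p`; if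
`p < v_{n+3-k}`, the `n + 2 - k` losers among the `n + 3 - k` highest valuations would all bid at
most `p`, leaving too few bids above it.

Conversely, for `v_{n+3-k} ≤ p ≤ v₁` there are equilibria with revenue `p`: in the first-price
auction everybody bids `p`; in the `k`-price auction agent 1 and the `k - 2` agents of lowest
valuation bid some `H > v₁` and everybody else bids `p`.
-/

open Classical

open Finset

namespace List

variable {α : Type*} [Preorder α] {l : List α}

lemma Pairwise.countP_getElem_lt_le (hl : l.Pairwise (· ≥ ·)) {i : ℕ} (hi : i < l.length) :
    l.countP (fun x => l[i] < x) ≤ i := by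
  have hdrop : (l.drop i).countP (fun x => l[i] < x) = 0 := by
    refine countP_eq_zero.mpr fun x hx => ?_
    obtain ⟨j, hj, rfl⟩ := mem_drop_iff_getElem.mp hx
    rcases Nat.eq_zero_or_pos j with rfl | hj0
    · simp
    · simpa using (pairwise_iff_getElem.mp hl i (i + j) hi (by omega) (by omega)).not_gt
  calc l.countP (fun x => l[i] < x)
      = (l.take i).countP (fun x => l[i] < x) + (l.drop i).countP (fun x => l[i] < x) := by
        rw [← countP_append, take_append_drop]
    _ ≤ (l.take i).length := by rw [hdrop, add_zero]; exact countP_le_length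
    _ ≤ i := length_take_le _ _

lemma Pairwise.succ_le_countP_getElem_le (hl : l.Pairwise (· ≥ ·)) {i : ℕ}
    (hi : i < l.length) :
    i + 1 ≤ l.countP (fun x => l[i] ≤ x) := by
  have htake : (l.take (i + 1)).countP (fun x => l[i] ≤ x) = i + 1 := by
    rw [countP_eq_length.mpr, length_take_of_le hi]
    intro x hx
    obtain ⟨j, hj, rfl⟩ := mem_take_iff_getElem.mp hx
    rcases Nat.lt_or_ge j i with hji | hji
    · simpa using pairwise_iff_getElem.mp hl j i (by omega) hi hji
    · simp [show j = i by omega]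
  exact htake ▸ (take_sublist _ _).countP_le

end List

lemma card_filter_eq_countP_ofFn {α : Type*} {n : ℕ} (b : Fin n → α) (P : α → Prop)
    [DecidablePred P] : #{j | P (b j)} = (List.ofFn b).countP P := by
  rw [card_def, filter_val, ← Multiset.countP_map, Fin.univ_val_map, Multiset.coe_countP]

section KthHighest

variable {n : ℕ} (b : Fin n → ℝ) {k : ℕ}

noncomputable def sortedBids : List ℝ :=
  (List.ofFn b).mergeSort (fun x y => decide (y ≤ x))

lemma sortedBids_perm : (sortedBids b).Perm (List.ofFn b) :=
  List.mergeSort_perm _ _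

lemma length_sortedBids : (sortedBids b).length = n := by
  rw [(sortedBids_perm b).length_eq, List.length_ofFn]

lemma sortedBids_pairwise : (sortedBids b).Pairwise (· ≥ ·) :=
  (List.pairwise_mergeSort (fun _ _ _ hxy hyz => by simp_all; linarith)
    (fun x y => by simpa using le_total y x) _).imp (by simp)

lemma countP_sortedBids (P : ℝ → Prop) [DecidablePred P] :
    (sortedBids b).countP P = #{j | P (b j)} := by
  rw [(sortedBids_perm b).countP_eq, card_filter_eq_countP_ofFn]

lemma kthHighest_eq_getElem (hk1 : 1 ≤ k) (hkn : k ≤ n) :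
    kthHighest b k = (sortedBids b)[k - 1]'(by rw [length_sortedBids]; omega) :=
  List.getD_eq_getElem _ _ _

lemma card_filter_kthHighest_lt_lt (hk1 : 1 ≤ k) (hkn : k ≤ n) :
    #{j | kthHighest b k < b j} < k := by
  rw [← countP_sortedBids, kthHighest_eq_getElem b hk1 hkn]
  have := (sortedBids_pairwise b).countP_getElem_lt_le (i := k - 1)
    (by rw [length_sortedBids]; omega)
  omega

lemma le_card_filter_kthHighest_le (hk1 : 1 ≤ k) (hkn : k ≤ n) :
    k ≤ #{j | kthHighest b k ≤ b j} := by
  rw [← countP_sortedBids, kthHighest_eq_getElem b hk1 hkn]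
  have := (sortedBids_pairwise b).succ_le_countP_getElem_le (i := k - 1)
    (by rw [length_sortedBids]; omega)
  omega

variable {b} {x : ℝ}

lemma le_kthHighest_of_le_card (hk1 : 1 ≤ k) (h : k ≤ #{j | x ≤ b j}) :
    x ≤ kthHighest b k := by
  have hkn : k ≤ n := h.trans ((card_filter_le _ _).trans_eq (card_fin n))
  by_contra! hlt
  have := card_le_card (monotone_filter_right univ (p := fun j => x ≤ b j)
    (q := fun j => kthHighest b k < b j) fun _ _ hj => hlt.trans_le hj)
  have := card_filter_kthHighest_lt_lt b hk1 hkn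
  omega

lemma kthHighest_le_of_card_lt (hk1 : 1 ≤ k) (hkn : k ≤ n) (h : #{j | x < b j} < k) :
    kthHighest b k ≤ x := by
  by_contra! hlt
  have := card_le_card (monotone_filter_right univ (p := fun j => kthHighest b k ≤ b j)
    (q := fun j => x < b j) fun _ _ hj => hlt.trans_le hj)
  have := le_card_filter_kthHighest_le b hk1 hkn
  omega

end KthHighest

section Wins

variable {n : ℕ} {b : Fin n → ℝ} {i j : Fin n} {x : ℝ}

lemma exists_wins (hn : 0 < n) (b : Fin n → ℝ) : ∃ w, wins b w := by
  have : Nonempty (Fin n) := ⟨⟨0, hn⟩⟩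
  obtain ⟨w, -, hw⟩ := exists_min_image univ (fun j => toLex (-b j, j)) univ_nonempty
  refine ⟨w, fun j => ?_, fun j hj => ?_⟩
  · rcases Prod.Lex.le_iff.mp (hw j (mem_univ j)) with h | ⟨h, -⟩ <;> simp at h <;> linarith
  · rcases Prod.Lex.le_iff.mp (hw j (mem_univ j)) with h | ⟨-, h⟩
    · simp [hj] at h
    · exact h

lemma wins.eq (hi : wins b i) (hj : wins b j) : i = j :=
  le_antisymm (hi.2 j (le_antisymm (hi.1 j) (hj.1 i))) (hj.2 i (le_antisymm (hj.1 i) (hi.1 j)))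

lemma wins.lt_of_lt (hi : wins b i) (hji : j < i) : b j < b i :=
  (hi.1 j).lt_of_ne fun h => (hi.2 j h).not_gt hji

lemma wins_of_forall_le_of_val_eq_zero (hi : i.val = 0) (h : ∀ j, b j ≤ b i) : wins b i :=
  ⟨h, fun j _ => Fin.le_def.mpr (hi ▸ j.val.zero_le)⟩

lemma wins_update_of_forall_lt (h : ∀ j ≠ i, b j < x) : wins (Function.update b i x) i := by
  refine ⟨fun j => ?_, fun j hj => ?_⟩ <;> rcases eq_or_ne j i with rfl | hji
  · rfl
  · simpa [hji] using (h j hji).le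
  · rfl
  · simp [hji] at hj; exact absurd hj (h j hji).ne

end Wins

lemma filter_update_eq_insert {ι α : Type*} [Fintype ι] [DecidableEq ι] (b : ι → α) (i : ι)
    {y : α} (P : α → Prop) [DecidablePred P] (hy : P y) :
    univ.filter (fun j => P (Function.update b i y j)) =
      insert i (univ.filter fun j => P (b j)) := by
  ext j
  rcases eq_or_ne j i with rfl | hji <;> simp [*]

section Price

variable {n k : ℕ} {b : Fin n → ℝ} {x : ℝ}

lemma le_price_self (i : Fin n) : b i ≤ price (n + 1) b := by
  rw [price, if_pos rfl]
  exact le_kthHighest_of_le_card le_rfl (card_pos.mpr ⟨i, by simp⟩)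

lemma le_price_of_forall_le (hk2 : 2 ≤ k) (hkn : k ≤ n + 1) (h : ∀ j, x ≤ b j) :
    x ≤ price k b := by
  have hcard : #{j | x ≤ b j} = n := by simp [h]
  unfold price
  split_ifs <;> exact le_kthHighest_of_le_card (by omega) (by omega)

lemma price_le_of_forall_le (hk2 : 2 ≤ k) (hkn : k ≤ n + 1) (h : ∀ j, b j ≤ x) :
    price k b ≤ x := by
  have hcard : #{j | x < b j} = 0 := by simp [fun j => (h j).not_gt]
  unfold price
  split_ifs <;> exact kthHighest_le_of_card_lt (by omega) (by omega) (by omega)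

lemma price_of_le (hkn : k ≤ n) : price k b = kthHighest b k :=
  if_neg (by omega)

lemma le_update_of_wins {i j : Fin n} (hji : j ≠ i) (h : ∀ j, x ≤ b j) {y : ℝ}
    (hw : wins (Function.update b i y) i) (l : Fin n) : x ≤ Function.update b i y l := by
  rcases eq_or_ne l i with rfl | hli
  · have hj := hw.1 j
    rw [Function.update_of_ne hji, Function.update_self] at hj
    simpa using (h j).trans hj
  · simpa [hli] using h l

end Price

section Necessity

variable {n k : ℕ} {v b : Fin n → ℝ}

lemma NashEq.price_le_valuation (hb : NashEq v k b) (hk2 : 2 ≤ k) (hkn : k ≤ n + 1)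
    {w : Fin n} (hw : wins b w) (hvw : 0 ≤ v w) : price k b ≤ v w := by
  have h := hb.2 w 0 le_rfl
  simp only [utility, if_pos hw] at h
  split_ifs at h with hw0
  · have : price k (Function.update b w 0) ≤ 0 :=
      price_le_of_forall_le hk2 hkn fun j => by simpa using hw0.1 j
    linarith
  · linarith

lemma NashEq.valuation_le_price_update (hb : NashEq v k b) {i : Fin n} (hi : ¬ wins b i)
    {x : ℝ} (hx : 0 ≤ x) (hwin : wins (Function.update b i x) i) :
    v i ≤ price k (Function.update b i x) := by
  have h := hb.2 i x hx
  simp only [utility, if_neg hi, if_pos hwin] at h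
  linarith

lemma NashEq.valuation_le_price_first (hb : NashEq v (n + 1) b) (hn : 2 ≤ n) (hv : Antitone v) :
    v ⟨1, by omega⟩ ≤ price (n + 1) b := by
  by_contra! hlt
  obtain ⟨w, hw⟩ := exists_wins (by omega) b
  obtain ⟨i, hi1, hiw⟩ : ∃ i : Fin n, i.val ≤ 1 ∧ i ≠ w := by
    by_cases hw0 : w.val = 0
    · exact ⟨⟨1, by omega⟩, le_rfl, fun h => by simp [← h] at hw0⟩
    · exact ⟨⟨0, by omega⟩, zero_le_one, fun h => hw0 (by simp [← h])⟩
  set p := price (n + 1) b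
  have hvi : p < v i := hlt.trans_le (hv (Fin.le_def.mpr hi1))
  obtain ⟨c, hpc, hcv⟩ := exists_between hvi
  have hbc : ∀ j, b j < c := fun j => (le_price_self j).trans_lt hpc
  have hwin := wins_update_of_forall_lt (i := i) fun j _ => hbc j
  have hprice : price (n + 1) (Function.update b i c) ≤ c := price_le_of_forall_le (by omega)
    le_rfl fun j => by rcases eq_or_ne j i with rfl | hji <;> simp [*, (hbc _).le]
  have := hb.valuation_le_price_update (fun h => hiw (h.eq hw)) ((hb.1 i).trans (hbc i).le) hwin
  linarith

lemma NashEq.bid_le_price_of_lt_valuation (hb : NashEq v k b) (hk2 : 2 ≤ k) (hkn : k ≤ n)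
    {i : Fin n} (hi : ¬ wins b i) (hpi : price k b < v i) :
    b i ≤ price k b ∧ k - 1 ≤ #{j | price k b < b j} := by
  set p := price k b with hp
  set B := price (n + 1) b + 1
  have hbB : ∀ j, b j < B := fun j => (le_price_self j).trans_lt (lt_add_one _)
  have hpB : p < B := (price_le_of_forall_le hk2 (by omega) le_price_self).trans_lt (lt_add_one _)
  have hwin := wins_update_of_forall_lt (i := i) fun j _ => hbB j
  have hdev := hpi.trans_le (hb.valuation_le_price_update hi ((hb.1 i).trans (hbB i).le) hwin)
  rw [price_of_le hkn] at hdev hp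
  have hcard : k ≤ #{j | p < Function.update b i B j} := by
    by_contra! h
    exact hdev.not_ge (kthHighest_le_of_card_lt (by omega) hkn h)
  rw [filter_update_eq_insert _ _ _ hpB] at hcard
  have hlt : #{j | p < b j} < k := hp ▸ card_filter_kthHighest_lt_lt b (by omega) hkn
  refine ⟨not_lt.mp fun hbi => ?_, ?_⟩
  · rw [insert_eq_of_mem (by simpa using hbi)] at hcard
    omega
  · have := card_insert_le i ({j | p < b j} : Finset (Fin n))
    omega

lemma NashEq.valuation_le_price_of_le (hb : NashEq v k b) (hv : Antitone v) (hk3 : 3 ≤ k)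
    (hkn : k ≤ n) : v ⟨n + 2 - k, by omega⟩ ≤ price k b := by
  by_contra! hlt
  obtain ⟨w, hw⟩ := exists_wins (by omega) b
  set L := (Iic (⟨n + 2 - k, by omega⟩ : Fin n)).erase w
  have hL : ∀ j ∈ L, b j ≤ price k b ∧ k - 1 ≤ #{j | price k b < b j} := fun j hj =>
    hb.bid_le_price_of_lt_valuation (by omega) hkn (fun h => (mem_erase.mp hj).1 (h.eq hw))
      (hlt.trans_le (hv (mem_Iic.mp (mem_erase.mp hj).2)))
  have hcardL : n + 2 - k ≤ #L :=
    le_trans (by simp) (pred_card_le_card_erase (s := Iic (⟨n + 2 - k, by omega⟩ : Fin n)))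
  obtain ⟨j₀, hj₀⟩ : L.Nonempty := card_pos.mp (by omega)
  have hle : #L ≤ #{j | ¬ price k b < b j} :=
    card_le_card fun j hj => by simpa using (hL j hj).1
  have := (hL j₀ hj₀).2
  have := card_filter_add_card_filter_not (s := univ) (fun j => price k b < b j)
  simp only [card_univ, Fintype.card_fin] at this
  omega

lemma NashEq.valuation_le_price (hb : NashEq v k b) (hv : Antitone v) (hk2 : 2 ≤ k)
    (hkn : k ≤ n + 1) (h : n + 2 - k < n) : v ⟨n + 2 - k, h⟩ ≤ price k b := by
  rcases hkn.eq_or_lt with rfl | hkn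
  · simpa using hb.valuation_le_price_first (by omega) hv
  · exact hb.valuation_le_price_of_le hv (by omega) (by omega)

end Necessity

section Construction

variable {n k : ℕ} {v : Fin n → ℝ} {p : ℝ}

lemma nashEq_of_wins {b : Fin n → ℝ} (hb : ∀ i, 0 ≤ b i) {w : Fin n} (hw : wins b w)
    (hpw : price k b ≤ v w)
    (hwdev : ∀ x, wins (Function.update b w x) w →
      price k b ≤ price k (Function.update b w x))
    (hdev : ∀ i ≠ w, ∀ x, wins (Function.update b i x) i →
      v i ≤ price k (Function.update b i x)) :
    NashEq v k b := by
  refine ⟨hb, fun i x _ => ?_⟩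
  rcases eq_or_ne i w with rfl | hiw
  · simp only [utility, if_pos hw]
    split_ifs with hwin
    · linarith [hwdev x hwin]
    · linarith
  · have hi : ¬ wins b i := fun h => hiw (h.eq hw)
    simp only [utility, if_neg hi]
    split_ifs with hwin
    · linarith [hdev i hiw x hwin]
    · rfl

lemma exists_nashEq_first (hn : 2 ≤ n) (hp0 : 0 ≤ p)
    (hlow : ∀ j : Fin n, 1 ≤ j.val → v j ≤ p) (hhigh : p ≤ v ⟨0, by omega⟩) :
    ∃ b, NashEq v (n + 1) b ∧ price (n + 1) b = p := by
  set b : Fin n → ℝ := fun _ => p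
  have hprice : price (n + 1) b = p := le_antisymm
    (price_le_of_forall_le (by omega) le_rfl fun _ => le_rfl)
    (le_price_of_forall_le (by omega) le_rfl fun _ => le_rfl)
  have hw : wins b ⟨0, by omega⟩ := wins_of_forall_le_of_val_eq_zero rfl fun _ => le_rfl
  refine ⟨b, nashEq_of_wins (fun _ => hp0) hw (hprice ▸ hhigh) (fun x hx => ?_)
    (fun i hi x hx => ?_), hprice⟩
  · exact hprice ▸ le_price_of_forall_le (by omega) le_rfl
      (le_update_of_wins (j := ⟨1, by omega⟩) (by simp [Fin.ext_iff]) (fun _ => le_rfl) hx)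
  · have hi1 : 1 ≤ i.val := Nat.one_le_iff_ne_zero.mpr fun h => hi (Fin.ext h)
    exact (hlow i hi1).trans (le_price_of_forall_le (by omega) le_rfl
      (le_update_of_wins (j := ⟨0, by omega⟩) (Ne.symm hi) (fun _ => le_rfl) hx))

lemma card_filter_le_val (n m : ℕ) : #{j : Fin n | m ≤ j.val} = n - m := by
  have := card_filter_add_card_filter_not (s := univ) fun j : Fin n => j.val < m
  simp only [Fin.card_filter_val_lt, not_lt, card_univ, Fintype.card_fin] at this
  omega

lemma exists_nashEq_of_le (hv : Antitone v) (hk2 : 2 ≤ k) (hkn : k ≤ n)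
    (hp0 : 0 ≤ p) (hlow : ∀ j : Fin n, n + 2 - k ≤ j.val → v j ≤ p)
    (hhigh : p ≤ v ⟨0, by omega⟩) :
    ∃ b, NashEq v k b ∧ price k b = p := by
  set z : Fin n := ⟨0, by omega⟩
  obtain ⟨H, hH⟩ : ∃ H, v z < H := ⟨_, lt_add_one _⟩
  have hpH : p < H := hhigh.trans_lt hH
  set T : Finset (Fin n) := insert z (univ.filter fun j : Fin n => n + 2 - k ≤ j.val)
  have hT : #T = k - 1 := by
    rw [card_insert_of_notMem (by simp [z]; omega), card_filter_le_val]
    omega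
  set b := T.piecewise (fun _ => H) (fun _ => p)
  have hbp : ∀ j, p ≤ b j := fun j => by by_cases hj : j ∈ T <;> simp [b, hj, hpH.le]
  have hbH : ∀ j, b j ≤ H := fun j => by by_cases hj : j ∈ T <;> simp [b, hj, hpH.le]
  have hbz : b z = H := by simp [b, T]
  have hprice : price k b = p := by
    refine le_antisymm ?_ (le_price_of_forall_le hk2 (by omega) hbp)
    have hgt : ({j | p < b j} : Finset (Fin n)) = T := by
      ext j
      by_cases hj : j ∈ T <;> simp [b, hj, hpH]
    rw [price_of_le hkn]
    exact kthHighest_le_of_card_lt (by omega) hkn (by rw [hgt, hT]; omega)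
  have hw : wins b z := wins_of_forall_le_of_val_eq_zero rfl fun j => hbz ▸ hbH j
  refine ⟨b, nashEq_of_wins (fun j => hp0.trans (hbp j)) hw (hprice ▸ hhigh) (fun x hx => ?_)
    (fun i hi x hx => ?_), hprice⟩
  · exact hprice ▸ le_price_of_forall_le hk2 (by omega)
      (le_update_of_wins (j := ⟨1, by omega⟩) (by simp [z, Fin.ext_iff]) hbp hx)
  have hxH : H < x := by
    have := hx.lt_of_lt (j := z) (Nat.pos_of_ne_zero fun h => hi (Fin.ext h))
    simpa [Function.update_of_ne hi.symm, hbz] using this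
  by_cases hiT : i ∈ T
  · exact (hlow i (by simpa [T, hi] using hiT)).trans (le_price_of_forall_le hk2 (by omega)
      (le_update_of_wins (j := z) hi.symm hbp hx))
  -- outbidding `H`, agent `i` adds a `k`-th bid of at least `H`
  refine (hv (show z ≤ i from Nat.zero_le _)).trans (hH.le.trans ?_)
  rw [price_of_le hkn]
  refine le_kthHighest_of_le_card (by omega) ?_
  calc k = #(insert i T) := by rw [card_insert_of_notMem hiT, hT]; omega
    _ ≤ _ := card_le_card fun j hj => by
      rcases eq_or_ne j i with rfl | hji
      · simp [hxH.le]
      · simp_all [b]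

end Construction

section Valuations

variable {n m : ℕ} {v : Fin n → ℝ}

lemma vIdx_succ_of_lt (h : m < n) : vIdx v (m + 1) = v ⟨m, h⟩ := by
  simp [vIdx, h]

lemma vIdx_nonneg (hv : ∀ i, 0 ≤ v i) (j : ℕ) : 0 ≤ vIdx v j := by
  unfold vIdx
  split_ifs
  exacts [hv _, le_rfl]

lemma valuation_le_vIdx_succ (hv : Antitone v) {j : Fin n} (hj : m ≤ j.val) :
    v j ≤ vIdx v (m + 1) := by
  rw [vIdx_succ_of_lt (hj.trans_lt j.isLt)]
  exact hv hj

lemma vIdx_succ_le {p : ℝ} (hp : 0 ≤ p) (h : ∀ hm : m < n, v ⟨m, hm⟩ ≤ p) :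
    vIdx v (m + 1) ≤ p := by
  by_cases hm : m < n
  · exact vIdx_succ_of_lt hm ▸ h hm
  · simpa [vIdx, show ¬ m + 1 ≤ n by omega] using hp

end Valuations

theorem stmt6 {n : ℕ} (hn : 2 ≤ n) (v : Fin n → ℝ) (hv : StrictAnti v) (hvpos : ∀ i, 0 < v i) (k : ℕ) (hk2 : 2 ≤ k) (hkn : k ≤ n + 1) (p : ℝ) :
    (∃ b : Fin n → ℝ, NashEq v k b ∧ price k b = p) ↔
    (vIdx v (n + 3 - k) ≤ p ∧ p ≤ v ⟨0, by omega⟩) := by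
  rw [show n + 3 - k = n + 2 - k + 1 by omega]
  constructor
  · rintro ⟨b, hb, rfl⟩
    obtain ⟨w, hw⟩ := exists_wins (by omega) b
    exact ⟨vIdx_succ_le (le_price_of_forall_le hk2 hkn hb.1)
        (hb.valuation_le_price hv.antitone hk2 hkn),
      (hb.price_le_valuation hk2 hkn hw (hvpos w).le).trans (hv.antitone (Nat.zero_le _))⟩
  · rintro ⟨hlow, hhigh⟩
    have hp0 : 0 ≤ p := (vIdx_nonneg (fun i => (hvpos i).le) _).trans hlow
    have hlow' (j : Fin n) (hj : n + 2 - k ≤ j.val) : v j ≤ p :=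
      (valuation_le_vIdx_succ hv.antitone hj).trans hlow
    rcases hkn.eq_or_lt with rfl | hkn
    · exact exists_nashEq_first hn hp0 (by simpa using hlow') hhigh
    · exact exists_nashEq_of_le hv.antitone hk2 (by omega) hp0 hlow' hhigh
end

section
/- For the k-price auction with 2 ≤ k ≤ n+1, the worst-case equilibrium welfare, defined as the minimum valuation of any agent who can win in some pure-strategy Nash equilibrium, equals v_{n−(k−2)}; consequently this worst-case welfare is strictly increasing in k: the second-price auction has worst-case welfare v_n and the first-price auction has worst-case welfare v_1. -/
open Classical

section helpers
variable {n : ℕ}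

variable {n : ℕ}

private lemma countP_eq_card (b : Fin n → ℝ) (x : ℝ) :
    (List.ofFn b).countP (fun y => decide (x ≤ y)) =
      (Finset.univ.filter fun i => x ≤ b i).card := by
  rw [List.ofFn_eq_map, List.countP_map]
  have h : (Finset.univ : Finset (Fin n)).val = ↑(List.finRange n) := by rw [Fin.univ_def]
  rw [Finset.card_def, Finset.filter_val, ← Multiset.countP_eq_card_filter, h]
  rfl

private lemma sorted_list (b : Fin n → ℝ) :
    ((List.ofFn b).mergeSort (fun x y => decide (y ≤ x))).Pairwise (fun x y => y ≤ x) := by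
  have := List.pairwise_mergeSort (le := fun x y : ℝ => decide (y ≤ x))
    (by intro a b c; simp only [decide_eq_true_eq]; intro h1 h2; linarith)
    (by intro a b; simpa using le_total b a) (List.ofFn b)
  simpa using this

private lemma len_list (b : Fin n → ℝ) :
    ((List.ofFn b).mergeSort (fun x y => decide (y ≤ x))).length = n := by
  simp

/-- membership -/
lemma kth_mem (b : Fin n → ℝ) {k : ℕ} (h1 : 1 ≤ k) (h2 : k ≤ n) :
    ∃ l, kthHighest b k = b l := by
  set L := (List.ofFn b).mergeSort (fun x y => decide (y ≤ x)) with hL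
  have hlen : L.length = n := len_list b
  have hlt : k - 1 < L.length := by omega
  have : kthHighest b k = L[k-1] := by
    rw [kthHighest, ← hL, List.getD_eq_getElem _ _ hlt]
  have hm : L[k-1] ∈ L := List.getElem_mem hlt
  rw [List.mem_mergeSort] at hm
  rw [List.mem_ofFn] at hm
  obtain ⟨l, hl⟩ := hm
  exact ⟨l, by rw [this, hl]⟩

lemma kth_le_iff (b : Fin n → ℝ) {k : ℕ} (h1 : 1 ≤ k) (h2 : k ≤ n) (x : ℝ) :
    x ≤ kthHighest b k ↔ k ≤ (Finset.univ.filter fun l => x ≤ b l).card := by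
  set L := (List.ofFn b).mergeSort (fun x y => decide (y ≤ x)) with hL
  have hlen : L.length = n := len_list b
  have hsort := sorted_list b
  rw [← hL] at hsort
  have hlt : k - 1 < L.length := by omega
  have hkth : kthHighest b k = L[k-1] := by
    rw [kthHighest, ← hL, List.getD_eq_getElem _ _ hlt]
  have hget : ∀ i j (hi : i < L.length) (hj : j < L.length), i < j → L[j] ≤ L[i] :=
    List.pairwise_iff_getElem.mp hsort
  rw [← countP_eq_card, hkth]
  have hperm : (List.ofFn b).countP (fun y => decide (x ≤ y)) = L.countP (fun y => decide (x ≤ y)) :=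
    ((List.mergeSort_perm (List.ofFn b) _).countP_eq _).symm
  rw [hperm]
  have hsplit : L.countP (fun y => decide (x ≤ y)) =
      (L.take k).countP (fun y => decide (x ≤ y)) + (L.drop k).countP (fun y => decide (x ≤ y)) := by
    rw [← List.countP_append, List.take_append_drop]
  constructor
  · intro hx
    have htake : (L.take k).countP (fun y => decide (x ≤ y)) = (L.take k).length := by
      apply List.countP_eq_length.mpr
      intro a ha
      rw [List.mem_take_iff_getElem] at ha
      obtain ⟨i, hi, rfl⟩ := ha
      have hik : i < k := lt_min_iff.mp hi |>.1
      simp only [decide_eq_true_eq]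
      rcases Nat.lt_or_ge i (k-1) with h | h
      · exact le_trans hx (hget i (k-1) (by omega) hlt h)
      · have : i = k - 1 := by omega
        subst this; exact hx
    have hlk : (L.take k).length = k := by
      rw [List.length_take]; omega
    rw [hsplit, htake, hlk]
    omega
  · intro hcard
    by_contra hx
    push_neg at hx
    have hdrop : (L.drop (k-1)).countP (fun y => decide (x ≤ y)) = 0 := by
      apply List.countP_eq_zero.mpr
      intro a ha
      rw [List.mem_drop_iff_getElem] at ha
      obtain ⟨i, hi, rfl⟩ := ha
      simp only [decide_eq_true_eq, not_le]
      rcases Nat.eq_zero_or_pos i with h | h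
      · subst h; simpa using hx
      · exact lt_of_le_of_lt (hget (k-1) (k-1+i) hlt (by omega) (by omega)) hx
    have hsplit' : L.countP (fun y => decide (x ≤ y)) =
        (L.take (k-1)).countP (fun y => decide (x ≤ y)) + (L.drop (k-1)).countP (fun y => decide (x ≤ y)) := by
      rw [← List.countP_append, List.take_append_drop]
    have : L.countP (fun y => decide (x ≤ y)) ≤ k - 1 := by
      rw [hsplit', hdrop]
      have := List.countP_le_length (l := L.take (k-1)) (p := fun y => decide (x ≤ y))
      have hlt' : (L.take (k-1)).length ≤ k-1 := by simp
      omega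
    omega

lemma wins_unique {b : Fin n → ℝ} {i j : Fin n} (hi : wins b i) (hj : wins b j) : i = j :=
  le_antisymm (hi.2 j (le_antisymm (hi.1 j) (hj.1 i))) (hj.2 i (le_antisymm (hj.1 i) (hi.1 j)))

lemma utility_winner {v : Fin n → ℝ} {k : ℕ} {b : Fin n → ℝ} {i : Fin n} (h : wins b i) :
    utility v k b i = v i - price k b := if_pos h

lemma utility_loser {v : Fin n → ℝ} {k : ℕ} {b : Fin n → ℝ} {i : Fin n} (h : ¬ wins b i) :
    utility v k b i = 0 := if_neg h

lemma winner_price_le {v : Fin n → ℝ} {k : ℕ} {b : Fin n → ℝ} {i : Fin n}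
    (hne : NashEq v k b) (hw : wins b i) (hi : i.val ≠ 0) (hn : 0 < n) :
    price k b ≤ v i := by
  have h0 := hne.2 i 0 le_rfl
  have hnw : ¬ wins (Function.update b i 0) i := by
    rintro ⟨hall, htie⟩
    have hz : (⟨0, hn⟩ : Fin n) ≠ i := by
      intro h; apply hi; rw [← h]
    have h1 : Function.update b i 0 ⟨0, hn⟩ = b ⟨0, hn⟩ := Function.update_of_ne hz _ _
    have h2 : Function.update b i 0 i = 0 := Function.update_self _ _ _
    have h3 : b ⟨0, hn⟩ ≤ 0 :=
      calc b ⟨0, hn⟩ = Function.update b i 0 ⟨0, hn⟩ := h1.symm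
        _ ≤ Function.update b i 0 i := hall _
        _ = 0 := h2
    have h4 : b ⟨0, hn⟩ = 0 := le_antisymm h3 (hne.1 _)
    have := htie ⟨0, hn⟩ (by rw [h1, h2, h4])
    rw [Fin.le_def] at this
    simp at this
    omega
  rw [utility_loser hnw, utility_winner hw] at h0
  linarith

private lemma card_filter_ge (m : ℕ) (hm : m < n) :
    (Finset.univ.filter (fun l : Fin n => m ≤ l.val)).card = n - m := by
  rw [show (Finset.univ.filter (fun l : Fin n => m ≤ l.val)) = Finset.Ici (⟨m, hm⟩ : Fin n) by
    ext l
    simp only [Finset.mem_filter, Finset.mem_univ, true_and, Finset.mem_Ici]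
    exact ⟨fun h => by rw [Fin.le_def]; exact h, fun h => by rw [Fin.le_def] at h; exact h⟩]
  exact Fin.card_Ici _

lemma lb_mid {v : Fin n → ℝ} (hv : StrictAnti v) {k : ℕ} (hk2 : 2 ≤ k) (hkn : k ≤ n)
    {b : Fin n → ℝ} {i : Fin n} (hne : NashEq v k b) (hwin : wins b i) :
    i.val ≤ n + 1 - k := by
  by_contra hcon
  push_neg at hcon
  -- i.val ≥ n + 2 - k ≥ 2
  have hi2 : 2 ≤ i.val := by omega
  have hp : price k b = kthHighest b k := if_neg (by omega)
  have h1 : kthHighest b k ≤ v i := by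
    rw [← hp]; exact winner_price_le hne hwin (by omega) (by omega)
  set S : Fin n → Finset (Fin n) := fun j => Finset.univ.filter (fun l => v j ≤ b l) with hS
  have claim2 : ∀ j : Fin n, j.val < i.val → (S j).card ≤ k - 1 := by
    intro j hj
    by_contra hc
    push_neg at hc
    have : k ≤ (S j).card := by omega
    have hvj : v j ≤ kthHighest b k := (kth_le_iff b (by omega) hkn _).mpr this
    have : v i < v j := hv (by rwa [Fin.lt_def])
    linarith
  have claim3 : ∀ j : Fin n, j.val < i.val → j ∉ S j ∧ (S j).card = k - 1 := by
    intro j hj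
    have hji : j ≠ i := by intro h; rw [h] at hj; omega
    have hnwj : ¬ wins b j := fun hw => hji (wins_unique hw hwin)
    set B := b i + 1 with hB
    have hB0 : (0:ℝ) ≤ B := by have := hne.1 i; linarith
    set u := Function.update b j B with hu
    have huj : u j = B := Function.update_self _ _ _
    have hul : ∀ l, l ≠ j → u l = b l := fun l hl => Function.update_of_ne hl _ _
    have hwu : wins u j := by
      constructor
      · intro l
        by_cases hl : l = j
        · rw [hl]
        · rw [hul l hl, huj]; have := hwin.1 l; linarith
      · intro l hl
        by_cases h : l = j
        · rw [h]
        · exfalso; rw [hul l h, huj] at hl; have := hwin.1 l; linarith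
    have hdev := hne.2 j B hB0
    rw [← hu, utility_winner hwu, utility_loser hnwj] at hdev
    have hpu : price k u = kthHighest u k := if_neg (by omega)
    rw [hpu] at hdev
    have hvj : v j ≤ kthHighest u k := by linarith
    have hcard : k ≤ (Finset.univ.filter (fun l => v j ≤ u l)).card :=
      (kth_le_iff u (by omega) hkn _).mp hvj
    have hsub : (Finset.univ.filter (fun l => v j ≤ u l)) ⊆ insert j (S j) := by
      intro l hl
      rw [Finset.mem_filter] at hl
      by_cases h : l = j
      · rw [h]; exact Finset.mem_insert_self _ _
      · refine Finset.mem_insert_of_mem ?_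
        rw [hS]; simp only [Finset.mem_filter, Finset.mem_univ, true_and]
        rw [← hul l h]; exact hl.2
    have hcard2 : k ≤ (insert j (S j)).card := le_trans hcard (Finset.card_le_card hsub)
    have hcard3 := Finset.card_insert_le j (S j)
    have hSle := claim2 j hj
    constructor
    · intro hjS
      rw [Finset.insert_eq_self.mpr hjS] at hcard2
      omega
    · omega
  -- all S j for j < i coincide
  set i1 : Fin n := ⟨i.val - 1, by omega⟩ with hi1
  have hi1lt : i1.val < i.val := by simp [hi1]; omega
  have hSeq : ∀ j : Fin n, j.val < i.val → S j = S i1 := by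
    intro j hj
    have hsub : S j ⊆ S i1 := by
      intro l hl
      rw [hS] at hl ⊢
      simp only [Finset.mem_filter, Finset.mem_univ, true_and] at hl ⊢
      have : v i1 ≤ v j := hv.antitone (by rw [Fin.le_def]; simp [hi1]; omega)
      linarith
    exact Finset.eq_of_subset_of_card_le hsub
      (by rw [(claim3 j hj).2, (claim3 i1 hi1lt).2])
  have hSsub : S i1 ⊆ Finset.univ.filter (fun l : Fin n => i.val ≤ l.val) := by
    intro l hl
    simp only [Finset.mem_filter, Finset.mem_univ, true_and]
    by_contra h
    push_neg at h
    exact (claim3 l h).1 (by rw [hSeq l h]; exact hl)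
  have hfin : (S i1).card ≤ n - i.val := by
    have := Finset.card_le_card hSsub
    rwa [card_filter_ge i.val i.isLt] at this
  rw [(claim3 i1 hi1lt).2] at hfin
  omega


lemma kth1_ge (hn : 1 ≤ n) (u : Fin n → ℝ) (l : Fin n) : u l ≤ kthHighest u 1 := by
  refine (kth_le_iff u le_rfl hn _).mpr ?_
  have : l ∈ Finset.univ.filter (fun l2 => u l ≤ u l2) := by simp
  exact Finset.card_pos.mpr ⟨l, this⟩

lemma lb_first {v : Fin n → ℝ} (hn : 2 ≤ n) (hv : StrictAnti v)
    {b : Fin n → ℝ} {i : Fin n} (hne : NashEq v (n+1) b) (hwin : wins b i) :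
    i.val = 0 := by
  by_contra hi0
  have hp : price (n+1) b = kthHighest b 1 := if_pos rfl
  have h1 : kthHighest b 1 ≤ v i := by
    rw [← hp]; exact winner_price_le hne hwin hi0 (by omega)
  have h2 : b i ≤ v i := le_trans (kth1_ge (by omega) b i) h1
  set z : Fin n := ⟨0, by omega⟩ with hz
  have hzi : z ≠ i := by intro h; apply hi0; rw [← h]
  have hnwz : ¬ wins b z := fun hw => hzi (wins_unique hw hwin)
  have hvz : v i < v z := hv (by rw [Fin.lt_def]; simp [hz]; omega)
  set b' := (b i + v z) / 2 with hb'
  have hbib' : b i < b' := by rw [hb']; linarith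
  have hb'vz : b' < v z := by rw [hb']; linarith
  have hb'0 : (0:ℝ) ≤ b' := le_trans (hne.1 i) (le_of_lt hbib')
  set u := Function.update b z b' with hu
  have huz : u z = b' := Function.update_self _ _ _
  have hul : ∀ l, l ≠ z → u l = b l := fun l hl => Function.update_of_ne hl _ _
  have hwu : wins u z := by
    constructor
    · intro l
      by_cases hl : l = z
      · rw [hl]
      · rw [hul l hl, huz]; have := hwin.1 l; linarith
    · intro l _
      rw [Fin.le_def]; simp [hz]
  have hdev := hne.2 z b' hb'0
  rw [← hu, utility_winner hwu, utility_loser hnwz] at hdev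
  have hpu : price (n+1) u = kthHighest u 1 := if_pos rfl
  rw [hpu] at hdev
  -- kthHighest u 1 ≤ b'
  obtain ⟨l0, hl0⟩ := kth_mem u (k := 1) le_rfl (by omega)
  have hle : kthHighest u 1 ≤ b' := by
    rw [hl0]
    by_cases h : l0 = z
    · rw [h, huz]
    · rw [hul l0 h]; have := hwin.1 l0; linarith
  linarith


lemma exists_eq_first {v : Fin n → ℝ} (hn : 2 ≤ n) (hvpos : ∀ i, 0 < v i) (hv : StrictAnti v) :
    ∃ b : Fin n → ℝ, NashEq v (n+1) b ∧ wins b ⟨0, by omega⟩ := by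
  set z : Fin n := ⟨0, by omega⟩ with hz
  set b : Fin n → ℝ := fun _ => v z with hb
  have hwz : wins b z := by
    refine ⟨fun j => le_rfl, fun j _ => ?_⟩
    rw [Fin.le_def]; simp [hz]
  have hpz : price (n+1) b = v z := by
    rw [price, if_pos rfl]
    obtain ⟨l0, hl0⟩ := kth_mem b (k := 1) le_rfl (by omega)
    have h2 := kth1_ge (by omega) b z
    rw [hl0]
  refine ⟨b, ⟨fun i => le_of_lt (hvpos z), ?_⟩, hwz⟩
  intro j b' hb'
  set u := Function.update b j b' with hu
  have hcur : 0 ≤ utility v (n+1) b j := by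
    by_cases h : j = z
    · rw [h, utility_winner hwz, hpz]; simp
    · rw [utility_loser (fun hw => h (wins_unique hw hwz))]
  by_cases hwu : wins u j
  · rw [utility_winner hwu]
    have hpu : price (n+1) u = kthHighest u 1 := if_pos rfl
    rw [hpu]
    -- some l0 ≠ j
    have : ∃ l0 : Fin n, l0 ≠ j := by
      by_cases h : j = z
      · refine ⟨⟨1, by omega⟩, ?_⟩
        rw [h]; intro he; have := congrArg Fin.val he; simp [hz] at this
      · exact ⟨z, fun he => h he.symm⟩
    obtain ⟨l0, hl0j⟩ := this
    have h3 : v z ≤ kthHighest u 1 := by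
      have := kth1_ge (by omega) u l0
      rwa [show u l0 = v z from Function.update_of_ne hl0j _ _] at this
    have h4 : v j ≤ v z := hv.antitone (by rw [Fin.le_def]; simp [hz])
    calc v j - kthHighest u 1 ≤ v z - v z := by linarith
      _ = 0 := by ring
      _ ≤ utility v (n+1) b j := hcur
  · rw [utility_loser hwu]; exact hcur


lemma exists_eq_mid {v : Fin n → ℝ} (hn : 2 ≤ n) (hvpos : ∀ i, 0 < v i) (hv : StrictAnti v)
    {k : ℕ} (hk2 : 2 ≤ k) (hkn : k ≤ n) :
    ∃ b : Fin n → ℝ, NashEq v k b ∧ wins b ⟨n + 1 - k, by omega⟩ := by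
  set w : ℕ := n + 1 - k with hwdef
  have hw1 : 1 ≤ w := by omega
  have hwn : w < n := by omega
  set z : Fin n := ⟨0, by omega⟩ with hz
  set W : Fin n := ⟨w, hwn⟩ with hW
  set c : ℝ := if h : w + 1 < n then v ⟨w + 1, h⟩ else 0 with hc
  have hc0 : 0 ≤ c := by
    rw [hc]; split
    · exact le_of_lt (hvpos _)
    · exact le_rfl
  have hcW : c < v W := by
    rw [hc]; split
    · exact hv (by rw [Fin.lt_def]; simp [hW])
    · exact hvpos _
  have hcz : c < v z := by
    rw [hc]; split
    · exact hv (by rw [Fin.lt_def]; simp [hz])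
    · exact hvpos _
  have hcj : ∀ j : Fin n, w < j.val → v j ≤ c := by
    intro j hj
    have h1 : w + 1 < n ∨ w + 1 = n := by omega
    have h2 : w + 1 < n := by
      rcases h1 with h | h
      · exact h
      · have := j.isLt; omega
    rw [hc, dif_pos h2]
    exact hv.antitone (by rw [Fin.le_def]; simp; omega)
  set b : Fin n → ℝ := fun j => if w ≤ j.val then v z else c with hb
  have hbl : ∀ l : Fin n, b l ≤ v z := by
    intro l; rw [hb]; dsimp only; split
    · exact le_rfl
    · exact le_of_lt hcz
  have hbc : ∀ l : Fin n, c ≤ b l := by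
    intro l; rw [hb]; dsimp only; split
    · exact le_of_lt hcz
    · exact le_rfl
  have hbW : b W = v z := by rw [hb]; simp [hW]
  have hwW : wins b W := by
    constructor
    · intro j; rw [hbW]; exact hbl j
    · intro j hj
      rw [hbW] at hj
      rw [Fin.le_def]
      by_contra h
      push_neg at h
      have : j.val < w := by simp [hW] at h; omega
      rw [hb] at hj; simp only at hj
      rw [if_neg (by omega)] at hj
      linarith
  have hfilterA : (Finset.univ.filter (fun l => v z ≤ b l)) =
      (Finset.univ.filter (fun l : Fin n => w ≤ l.val)) := by
    ext l
    simp only [Finset.mem_filter, Finset.mem_univ, true_and]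
    constructor
    · intro h
      by_contra hcon
      rw [hb] at h; simp only at h
      rw [if_neg hcon] at h
      linarith
    · intro h
      rw [hb]; simp only
      rw [if_pos h]
  have hcardA : (Finset.univ.filter (fun l => v z ≤ b l)).card = k - 1 := by
    rw [hfilterA, card_filter_ge w hwn]; omega
  have hprice : price k b = c := by
    rw [price, if_neg (by omega)]
    have hge : c ≤ kthHighest b k := by
      refine (kth_le_iff b (by omega) hkn _).mpr ?_
      have : (Finset.univ.filter (fun l => c ≤ b l)) = Finset.univ := by
        refine Finset.filter_true_of_mem fun l _ => hbc l
      rw [this, Finset.card_univ, Fintype.card_fin]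
      exact hkn
    obtain ⟨l0, hl0⟩ := kth_mem b (k := k) (by omega) hkn
    by_cases h : w ≤ l0.val
    · exfalso
      have hbz : b l0 = v z := by rw [hb]; simp only; rw [if_pos h]
      have : v z ≤ kthHighest b k := by rw [hl0, hbz]
      have := (kth_le_iff b (by omega) hkn _).mp this
      rw [hcardA] at this
      omega
    · push_neg at h
      have : b l0 = c := by rw [hb]; simp only; rw [if_neg (by omega)]
      rw [hl0, this]
  refine ⟨b, ⟨fun l => le_trans hc0 (hbc l), ?_⟩, hwW⟩
  intro j b' hb'
  set u := Function.update b j b' with hu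
  have huj : u j = b' := Function.update_self _ _ _
  have hul : ∀ l, l ≠ j → u l = b l := fun l hl => Function.update_of_ne hl _ _
  by_cases hwu : wins u j
  · rw [utility_winner hwu, price, if_neg (by omega)]
    by_cases hjw : w ≤ j.val
    · -- all entries of u are ≥ c
      have hex : ∃ l0 : Fin n, l0 ≠ j := by
        by_cases h : j = z
        · refine ⟨⟨1, by omega⟩, ?_⟩
          rw [h]; intro he; have := congrArg Fin.val he; simp [hz] at this
        · exact ⟨z, fun he => h he.symm⟩
      obtain ⟨l0, hl0j⟩ := hex
      have hb'c : c ≤ b' := by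
        calc c ≤ b l0 := hbc l0
          _ = u l0 := (hul l0 hl0j).symm
          _ ≤ u j := hwu.1 l0
          _ = b' := huj
      have hnp : c ≤ kthHighest u k := by
        refine (kth_le_iff u (by omega) hkn _).mpr ?_
        have : (Finset.univ.filter (fun l => c ≤ u l)) = Finset.univ := by
          refine Finset.filter_true_of_mem fun l _ => ?_
          by_cases h : l = j
          · rw [h, huj]; exact hb'c
          · rw [hul l h]; exact hbc l
        rw [this, Finset.card_univ, Fintype.card_fin]
        exact hkn
      by_cases hjW : j = W
      · rw [hjW, utility_winner hwW, hprice]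
        have : v j = v W := by rw [hjW]
        linarith
      · have hjgt : w < j.val := by
          rcases Nat.lt_or_ge w j.val with h | h
          · exact h
          · exfalso; exact hjW (Fin.ext (by simp [hW]; omega))
        have hvj : v j ≤ c := hcj j hjgt
        rw [utility_loser (fun hw2 => hjW (wins_unique hw2 hwW))]
        linarith
    · -- j.val < w : deviator must outbid v z, price becomes ≥ v z
      push_neg at hjw
      have hWj : W ≠ j := by
        intro h; have := congrArg Fin.val h; simp [hW] at this; omega
      have hb'v : v z ≤ b' := by
        calc v z = b W := hbW.symm
          _ = u W := (hul W hWj).symm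
          _ ≤ u j := hwu.1 W
          _ = b' := huj
      have hjmem : j ∉ (Finset.univ.filter (fun l : Fin n => w ≤ l.val)) := by
        simp only [Finset.mem_filter, Finset.mem_univ, true_and]; omega
      have hsub : insert j (Finset.univ.filter (fun l : Fin n => w ≤ l.val)) ⊆
          (Finset.univ.filter (fun l => v z ≤ u l)) := by
        intro l hl
        rcases Finset.mem_insert.mp hl with h | h
        · subst h
          simp only [Finset.mem_filter, Finset.mem_univ, true_and]
          rw [huj]; exact hb'v
        · simp only [Finset.mem_filter, Finset.mem_univ, true_and] at h ⊢
          have hlj : l ≠ j := by intro he; subst he; omega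
          rw [hul l hlj, hb]; simp only; rw [if_pos h]
      have hcard : k ≤ (Finset.univ.filter (fun l => v z ≤ u l)).card := by
        have h1 := Finset.card_le_card hsub
        rw [Finset.card_insert_of_notMem hjmem, card_filter_ge w hwn] at h1
        omega
      have hnp : v z ≤ kthHighest u k := (kth_le_iff u (by omega) hkn _).mpr hcard
      have hjW : j ≠ W := fun h => hWj h.symm
      rw [utility_loser (fun hw2 => hjW (wins_unique hw2 hwW))]
      have : v j ≤ v z := hv.antitone (by rw [Fin.le_def]; simp [hz])
      linarith
  · rw [utility_loser hwu]
    by_cases hjW : j = W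
    · rw [hjW, utility_winner hwW, hprice]
      linarith
    · rw [utility_loser (fun hw2 => hjW (wins_unique hw2 hwW))]

end helpers


lemma vIdx_eq {v : Fin n → ℝ} {k : ℕ} (hk2 : 2 ≤ k) (hk1 : k ≤ n + 1) (hn : 2 ≤ n) :
    vIdx v (n + 2 - k) = v ⟨n + 1 - k, by omega⟩ := by
  rw [vIdx, dif_pos ⟨by omega, by omega⟩]
  congr 1
  exact Fin.ext (by simp; omega)

theorem stmt11 {n : ℕ} (hn : 2 ≤ n) (v : Fin n → ℝ) (hv : StrictAnti v) (hvpos : ∀ i, 0 < v i) :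
    (∀ k : ℕ, 2 ≤ k → k ≤ n + 1 →
      IsLeast {x : ℝ | ∃ i : Fin n, ∃ b : Fin n → ℝ,
        NashEq v k b ∧ wins b i ∧ v i = x} (vIdx v (n + 2 - k))) ∧
    (∀ k k' : ℕ, 2 ≤ k → k < k' → k' ≤ n + 1 →
      vIdx v (n + 2 - k) < vIdx v (n + 2 - k')) := by
  constructor
  · intro k hk2 hk1
    have hidx := vIdx_eq (v := v) hk2 hk1 hn
    constructor
    · rw [Set.mem_setOf_eq]
      rcases Nat.lt_or_ge k (n + 1) with hlt | hge
      · have hkn : k ≤ n := by omega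
        obtain ⟨b, hne, hw⟩ := exists_eq_mid hn hvpos hv hk2 hkn
        exact ⟨⟨n + 1 - k, by omega⟩, b, hne, hw, hidx.symm⟩
      · have hkeq : k = n + 1 := by omega
        subst hkeq
        obtain ⟨b, hne, hw⟩ := exists_eq_first hn hvpos hv
        refine ⟨⟨0, by omega⟩, b, hne, hw, ?_⟩
        rw [hidx]
        congr 1
        exact Fin.ext (by simp)
    · rintro x ⟨i, b, hne, hwin, rfl⟩
      rw [hidx]
      rcases Nat.lt_or_ge k (n + 1) with hlt | hge
      · have hkn : k ≤ n := by omega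
        have hi := lb_mid hv hk2 hkn hne hwin
        exact hv.antitone (by rw [Fin.le_def]; simp; omega)
      · have hkeq : k = n + 1 := by omega
        subst hkeq
        have hi0 := lb_first hn hv hne hwin
        have : i = ⟨n + 1 - (n + 1), by omega⟩ := Fin.ext (by simp; omega)
        rw [this]
  · intro k k' hk2 hkk hk'
    rw [vIdx_eq hk2 (by omega) hn, vIdx_eq (by omega) hk' hn]
    exact hv (by rw [Fin.lt_def]; simp; omega)
end
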